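/- arXiv:0903.4019 — 4 statements merged into one kernel-verified Lean document; each statement's English description precedes it below -/
import Mathlib

section
/- The union A(0) = ⋃_{T ≥ 0} A(0,T) of accessible sets from the origin over all times is a vector subspace of ℝⁿ. -/
open MeasureTheory Matrix intervalIntegral

/-- The accessible set from the origin in time `T` for `Ẋ = AX + Bu`
with unconstrained integrable scalar controls. -/
def accSet (n : ℕ) (A : Matrix (Fin n) (Fin n) ℝ) (B : Fin n → ℝ) (T : ℝ) :
    Set (Fin n → ℝ) :=
  {x | ∃ u : ℝ → ℝ, IntervalIntegrable u volume 0 T ∧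
    x = ∫ s in (0:ℝ)..T, u s • (NormedSpace.exp ((T - s) • A)).mulVec B}

/-!
Each `A(0,T)` is a subspace, since `u ↦ ∫₀ᵀ u(s) exp((T - s)A) B ds` is linear in the control.
For `0 ≤ T₁ ≤ T₂` we have `A(0,T₁) ⊆ A(0,T₂)`: let the control rest for time `T₂ - T₁` and then
replay a control steering to the given point in time `T₁`. So `A(0)` is the union of a chain of
subspaces, hence a subspace. Only the continuity of the kernel `t ↦ exp(tA) B` matters.
-/

open Set

section

variable {E : Type*} [NormedAddCommGroup E] [NormedSpace ℝ E]

def convolutionReach (g : C(ℝ, E)) (T : ℝ) : Submodule ℝ E where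
  carrier := {x | ∃ u : ℝ → ℝ, IntervalIntegrable u volume 0 T ∧
    x = ∫ s in (0:ℝ)..T, u s • g (T - s)}
  zero_mem' := ⟨0, intervalIntegrable_const, by simp⟩
  add_mem' := by
    rintro - - ⟨u, hu, rfl⟩ ⟨v, hv, rfl⟩
    have hg : ContinuousOn (fun s => g (T - s)) (uIcc 0 T) := by fun_prop
    refine ⟨u + v, hu.add hv, ?_⟩
    simp only [Pi.add_apply, add_smul]
    exact (integral_add (hu.smul_continuousOn hg) (hv.smul_continuousOn hg)).symm
  smul_mem' := by
    rintro c - ⟨u, hu, rfl⟩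
    refine ⟨fun s => c * u s, hu.const_mul c, ?_⟩
    simp only [← smul_smul, intervalIntegral.integral_smul]

theorem convolutionReach_mono (g : C(ℝ, E)) {T₁ T₂ : ℝ} (h₀ : 0 ≤ T₁) (h : T₁ ≤ T₂) :
    convolutionReach g T₁ ≤ convolutionReach g T₂ := by
  rintro - ⟨u, hu, rfl⟩
  set d := T₂ - T₁
  have hd : 0 ≤ d := sub_nonneg.2 h
  have hT₂ : T₁ + d = T₂ := by ring
  have hT₁ : T₂ - d = T₁ := by ring
  have hIoc : Ioc 0 T₂ ∩ Ioi d = Ioc d T₂ := by rw [Ioc_inter_Ioi, max_eq_right hd]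
  set v := (Ioi d).indicator fun s => u (s - d)
  have hu' : IntervalIntegrable (fun s => u (s - d)) volume d T₂ := by
    simpa [hT₂] using hu.comp_sub_right d
  refine ⟨v, ?_, ?_⟩
  · rw [intervalIntegrable_iff_integrableOn_Ioc_of_le (by linarith),
      integrableOn_indicator_iff measurableSet_Ioi, inter_comm, hIoc]
    exact (intervalIntegrable_iff_integrableOn_Ioc_of_le (by linarith)).1 hu'
  · symm
    calc ∫ s in (0:ℝ)..T₂, v s • g (T₂ - s)
        = ∫ s in Ioc 0 T₂, (Ioi d).indicator (fun s => u (s - d) • g (T₂ - s)) s := by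
          simp only [v, indicator_smul_apply_left, integral_of_le (by linarith : 0 ≤ T₂)]
      _ = ∫ s in d..T₂, (fun t => u t • g (T₁ - t)) (s - d) := by
          rw [setIntegral_indicator measurableSet_Ioi, hIoc, ← integral_of_le (by linarith)]
          simp only [sub_sub_eq_add_sub, ← hT₂]
      _ = ∫ s in (0:ℝ)..T₁, u s • g (T₁ - s) := by
          rw [integral_comp_sub_right (fun t => u t • g (T₁ - t)), sub_self, hT₁]

theorem coe_iSup_nonneg_convolutionReach (g : C(ℝ, E)) :
    ((⨆ T : {T : ℝ // 0 ≤ T}, convolutionReach g T : Submodule ℝ E) : Set E) =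
      ⋃ T ∈ {T : ℝ | 0 ≤ T}, (convolutionReach g T : Set E) := by
  have : Nonempty {T : ℝ // 0 ≤ T} := ⟨⟨0, le_rfl⟩⟩
  have hmono : Monotone fun T : {T : ℝ // 0 ≤ T} => convolutionReach g T :=
    fun T₁ T₂ h => convolutionReach_mono g T₁.2 h
  rw [Submodule.coe_iSup_of_directed _ hmono.directed_le, iUnion_subtype]
  rfl

end

section

attribute [local instance] Matrix.linftyOpNormedRing Matrix.linftyOpNormedAlgebra

noncomputable def Matrix.expSMulMulVec {ι : Type*} [Fintype ι] [DecidableEq ι]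
    (A : Matrix ι ι ℝ) (B : ι → ℝ) : C(ℝ, ι → ℝ) where
  toFun t := NormedSpace.exp (t • A) *ᵥ B
  continuous_toFun :=
    (NormedSpace.exp_continuous.comp (continuous_id.smul continuous_const)).matrix_mulVec
      continuous_const

end

theorem accSet_eq_convolutionReach (n : ℕ) (A : Matrix (Fin n) (Fin n) ℝ) (B : Fin n → ℝ)
    (T : ℝ) : accSet n A B T = convolutionReach (A.expSMulMulVec B) T :=
  rfl

/-- The union `A(0) = ⋃_{T ≥ 0} A(0,T)` of the accessible sets from the origin
over all times is a vector subspace of `ℝⁿ`. -/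
theorem stmt3 (n : ℕ) (A : Matrix (Fin n) (Fin n) ℝ) (B : Fin n → ℝ) :
    ∃ S : Submodule ℝ (Fin n → ℝ),
      (S : Set (Fin n → ℝ)) = ⋃ T ∈ {T : ℝ | 0 ≤ T}, accSet n A B T := by
  refine ⟨⨆ T : {T : ℝ // 0 ≤ T}, convolutionReach (A.expSMulMulVec B) T, ?_⟩
  simp only [accSet_eq_convolutionReach]
  exact coe_iSup_nonneg_convolutionReach _
end

section
/- (Kalman condition, sufficiency) If the n×(nm) matrix C = (B | AB | ⋯ | A^{n-1}B) has rank n, then the linear system Ẋ = AX + Bu with unconstrained controls u : [0,T] → ℝᵐ is controllable: for any X₀, X₁ ∈ ℝⁿ and any T > 0 there exists a control u such that the solution with X(0)=X₀ satisfies X(T)=X₁. -/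
/-!
Write `P s = exp ((T - s) • A) * B`, so that the reachable displacements `X₁ - exp (T • A) *ᵥ X₀`
are the integrals `∫₀ᵀ P s *ᵥ u s`. The controllability Gramian `G = ∫₀ᵀ P s * (P s)ᵀ` is
invertible: if `G *ᵥ v = 0` then `0 = v ⬝ᵥ G *ᵥ v = ∫₀ᵀ ‖v ᵥ* P s‖²`, so `v ᵥ* (exp (t • A) * B)`
vanishes for `t ∈ (0, T)`. Differentiating `k` times gives `w ᵥ* (A ^ k * B) = 0` for
`w = v ᵥ* exp (t • A)`, so `w = 0` by the rank condition, and `v = 0` since `exp (t • A)` is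
invertible. Solving `G *ᵥ v = X₁ - exp (T • A) *ᵥ X₀`, the control `u s = v ᵥ* P s` works.
-/

open MeasureTheory Matrix intervalIntegral

/-- The Kalman matrix `C = (B | AB | ⋯ | A^{n-1}B)`, an `n × (n·m)` matrix
whose column blocks are `A^k * B` for `k = 0, …, n-1`. -/
def kalmanMatrix (n m : ℕ) (A : Matrix (Fin n) (Fin n) ℝ)
    (B : Matrix (Fin n) (Fin m) ℝ) : Matrix (Fin n) (Fin n × Fin m) ℝ :=
  Matrix.of fun i kj => (A ^ (kj.1 : ℕ) * B) i kj.2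

open NormedSpace Set Filter

attribute [local instance] Matrix.linftyOpNormedRing Matrix.linftyOpNormedAlgebra

namespace Matrix

variable {ι κ : Type*} [Fintype ι] [DecidableEq ι] [Fintype κ]

omit [DecidableEq ι] in
theorem vecMul_injective_of_rank_eq_card {K : Type*} [Field K] {M : Matrix ι κ K}
    (h : M.rank = Fintype.card ι) : Function.Injective fun v => v ᵥ* M := by
  rw [vecMul_injective_iff, linearIndependent_iff_card_eq_finrank_span, Set.finrank,
    ← rank_eq_finrank_span_row, h]

theorem hasDerivAt_vecMul_exp_smul_vecMul (A : Matrix ι ι ℝ) (C : Matrix ι κ ℝ) (v : ι → ℝ)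
    (t : ℝ) :
    HasDerivAt (fun t : ℝ => v ᵥ* exp (t • A) ᵥ* C) (v ᵥ* exp (t • A) ᵥ* (A * C)) t := by
  have hexp : HasDerivAt (fun t : ℝ => v ᵥ* exp (t • A)) (v ᵥ* (exp (t • A) * A)) t := by
    exact (LinearMap.toContinuousLinearMap (vecMulBilin ℝ ℝ v)).hasFDerivAt.comp_hasDerivAt t
      (hasDerivAt_exp_smul_const A t)
  have hC :
      HasDerivAt (fun t : ℝ => v ᵥ* exp (t • A) ᵥ* C) (v ᵥ* (exp (t • A) * A) ᵥ* C) t := by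
    exact (LinearMap.toContinuousLinearMap (vecMulLinear C)).hasFDerivAt.comp_hasDerivAt t hexp
  simpa only [vecMul_vecMul, Matrix.mul_assoc] using hC

theorem vecMul_exp_smul_vecMul_pow_mul_eq_zero {A : Matrix ι ι ℝ} {B : Matrix ι κ ℝ}
    {v : ι → ℝ} {U : Set ℝ} (hU : IsOpen U) (h : ∀ t ∈ U, v ᵥ* exp (t • A) ᵥ* B = 0) (k : ℕ) :
    ∀ t ∈ U, v ᵥ* exp (t • A) ᵥ* (A ^ k * B) = 0 := by
  induction k with
  | zero => simpa using h
  | succ k ih =>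
    intro t ht
    have hzero : (fun t : ℝ => v ᵥ* exp (t • A) ᵥ* (A ^ k * B)) =ᶠ[nhds t] fun _ => 0 :=
      eventually_of_mem (hU.mem_nhds ht) ih
    rw [pow_succ', Matrix.mul_assoc]
    exact (hasDerivAt_vecMul_exp_smul_vecMul A _ v t).unique
      ((hasDerivAt_const t 0).congr_of_eventuallyEq hzero)

noncomputable def gramian (P : ℝ → Matrix ι κ ℝ) (a b : ℝ) : Matrix ι ι ℝ :=
  ∫ s in a..b, P s * (P s)ᵀ

variable {P : ℝ → Matrix ι κ ℝ} {a b : ℝ}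

theorem gramian_mulVec (hP : Continuous P) (v : ι → ℝ) :
    gramian P a b *ᵥ v = ∫ s in a..b, P s *ᵥ (v ᵥ* P s) := by
  have h : ∫ s in a..b, (P s * (P s)ᵀ) *ᵥ v = gramian P a b *ᵥ v :=
    (LinearMap.toContinuousLinearMap ((mulVecBilin ℝ ℝ).flip v)).intervalIntegral_comp_comm
      ((hP.matrix_mul hP.matrix_transpose).intervalIntegrable a b)
  simp only [← h, ← mulVec_mulVec, mulVec_transpose]

theorem dotProduct_gramian_mulVec (hP : Continuous P) (v : ι → ℝ) :
    v ⬝ᵥ (gramian P a b *ᵥ v) = ∫ s in a..b, (v ᵥ* P s) ⬝ᵥ (v ᵥ* P s) := by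
  have h : ∫ s in a..b, v ⬝ᵥ (P s *ᵥ (v ᵥ* P s)) = v ⬝ᵥ ∫ s in a..b, P s *ᵥ (v ᵥ* P s) :=
    (LinearMap.toContinuousLinearMap (dotProductBilin ℝ ℝ v)).intervalIntegral_comp_comm
      ((hP.matrix_mulVec (continuous_const.matrix_vecMul hP)).intervalIntegrable a b)
  simp only [gramian_mulVec hP, ← h, dotProduct_mulVec]

theorem isUnit_gramian (hP : Continuous P) (hab : a < b)
    (h : ∀ v : ι → ℝ, (∀ s ∈ Ioo a b, v ᵥ* P s = 0) → v = 0) : IsUnit (gramian P a b) := by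
  rw [← mulVec_injective_iff_isUnit, ← coe_mulVecLin, ← LinearMap.ker_eq_bot,
    LinearMap.ker_eq_bot']
  intro v hv
  refine h v fun s hs => ?_
  by_contra hne
  have hsq_nonneg (x : κ → ℝ) : 0 ≤ x ⬝ᵥ x := Fintype.sum_nonneg fun _ => mul_self_nonneg _
  have hpos : 0 < ∫ s in a..b, (v ᵥ* P s) ⬝ᵥ (v ᵥ* P s) :=
    integral_pos hab (by fun_prop) (fun _ _ => hsq_nonneg _)
      ⟨s, Ioo_subset_Icc_self hs, (hsq_nonneg _).lt_of_ne' (dotProduct_self_eq_zero.not.mpr hne)⟩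
  rw [← dotProduct_gramian_mulVec hP, ← mulVecLin_apply, hv, dotProduct_zero] at hpos
  exact hpos.false

theorem exists_continuous_integral_mulVec_eq (hP : Continuous P) (hab : a < b)
    (h : ∀ v : ι → ℝ, (∀ s ∈ Ioo a b, v ᵥ* P s = 0) → v = 0) (y : ι → ℝ) :
    ∃ u : ℝ → κ → ℝ, Continuous u ∧ ∫ s in a..b, P s *ᵥ u s = y := by
  obtain ⟨v, rfl⟩ := mulVec_surjective_iff_isUnit.mpr (isUnit_gramian hP hab h) y
  exact ⟨fun s => v ᵥ* P s, continuous_const.matrix_vecMul hP, (gramian_mulVec hP v).symm⟩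

end Matrix

section Kalman

variable {n m : ℕ} {A : Matrix (Fin n) (Fin n) ℝ} {B : Matrix (Fin n) (Fin m) ℝ}

theorem eq_zero_of_forall_vecMul_pow_mul_eq_zero (hK : (kalmanMatrix n m A B).rank = n)
    {w : Fin n → ℝ} (hw : ∀ k < n, w ᵥ* (A ^ k * B) = 0) : w = 0 := by
  refine vecMul_injective_of_rank_eq_card (by simpa using hK) ?_
  ext ⟨k, j⟩
  simpa [kalmanMatrix, vecMul, dotProduct] using congrFun (hw k k.isLt) j

theorem eq_zero_of_vecMul_exp_smul_vecMul_eq_zero (hK : (kalmanMatrix n m A B).rank = n)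
    {v : Fin n → ℝ} {U : Set ℝ} (hU : IsOpen U) (hne : U.Nonempty)
    (h : ∀ t ∈ U, v ᵥ* exp (t • A) ᵥ* B = 0) : v = 0 := by
  obtain ⟨t, ht⟩ := hne
  have hw : v ᵥ* exp (t • A) = 0 := eq_zero_of_forall_vecMul_pow_mul_eq_zero hK fun k _ =>
    vecMul_exp_smul_vecMul_pow_mul_eq_zero hU h k t ht
  exact vecMul_injective_of_isUnit (isUnit_exp _) (by simpa using hw)

end Kalman

/-- Kalman condition, sufficiency: if `rank (B | AB | ⋯ | A^{n-1}B) = n`, then the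
linear system `Ẋ = AX + Bu` with unconstrained controls is controllable: for any
`X₀, X₁` and any `T > 0` there is an integrable control steering `X₀` to `X₁` in time `T`. -/
theorem stmt6 (n m : ℕ) (A : Matrix (Fin n) (Fin n) ℝ) (B : Matrix (Fin n) (Fin m) ℝ)
    (hK : (kalmanMatrix n m A B).rank = n) :
    ∀ X₀ X₁ : Fin n → ℝ, ∀ T : ℝ, 0 < T →
      ∃ u : ℝ → Fin m → ℝ,
        IntervalIntegrable
          (fun s => (NormedSpace.exp ((T - s) • A)).mulVec (B.mulVec (u s))) volume 0 T ∧
        X₁ = (NormedSpace.exp (T • A)).mulVec X₀ +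
          ∫ s in (0:ℝ)..T, (NormedSpace.exp ((T - s) • A)).mulVec (B.mulVec (u s)) := by
  intro X₀ X₁ T hT
  set P : ℝ → Matrix (Fin n) (Fin m) ℝ := fun s => exp ((T - s) • A) * B
  have hP : Continuous P := by fun_prop
  have hker (v : Fin n → ℝ) (hv : ∀ s ∈ Ioo 0 T, v ᵥ* P s = 0) : v = 0 :=
    eq_zero_of_vecMul_exp_smul_vecMul_eq_zero hK isOpen_Ioo (nonempty_Ioo.mpr hT) fun t ht => by
      simpa [P, vecMul_vecMul] using hv (T - t) ⟨by linarith [ht.2], by linarith [ht.1]⟩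
  obtain ⟨u, hu, hreach⟩ :=
    exists_continuous_integral_mulVec_eq hP hT hker (X₁ - exp (T • A) *ᵥ X₀)
  have hintegrand : (fun s => exp ((T - s) • A) *ᵥ (B *ᵥ u s)) = fun s => P s *ᵥ u s :=
    funext fun s => mulVec_mulVec _ _ _
  refine ⟨u, ?_, ?_⟩
  · rw [hintegrand]
    exact (hP.matrix_mulVec hu).intervalIntegrable 0 T
  · rw [hintegrand, hreach, add_sub_cancel]
end

section
/- (Kalman condition, necessity) If the linear system Ẋ = AX + Bu with unconstrained controls is controllable, then the Kalman matrix C = (B | AB | ⋯ | A^{n-1}B) has rank n. -/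
/-!
If `φ C = 0` for a row vector `φ`, then `φ A^k B = 0` for every `k` by Cayley–Hamilton, hence
`φ exp(tA) B = 0` for every `t`, since `exp(tA)` lies in the (closed, finite-dimensional) algebra
generated by `A`. So `φ` annihilates every state reachable from `0`; steering `0` to `φ` gives
`φ ⬝ φ = 0`. Thus the rows of `C` are linearly independent.
-/

open MeasureTheory Matrix intervalIntegral

namespace Matrix

variable {ι R : Type*} [Fintype ι] [CommRing R]

theorem adjoin_singleton_le_span_pow [DecidableEq ι] (A : Matrix ι ι R) :
    Subalgebra.toSubmodule (Algebra.adjoin R {A}) ≤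
      Submodule.span R (Set.range fun i : Fin (Fintype.card ι) => A ^ (i : ℕ)) := by
  intro M hM
  rw [Subalgebra.mem_toSubmodule, Algebra.adjoin_singleton_eq_range_aeval] at hM
  obtain ⟨p, rfl⟩ := hM
  nontriviality R
  cases isEmpty_or_nonempty ι
  · simp [Subsingleton.elim (Polynomial.aeval A p) 0]
  have hdeg : (p %ₘ A.charpoly).natDegree < Fintype.card ι := by
    have hcard : A.charpoly.natDegree = Fintype.card ι := A.charpoly_natDegree_eq_dim
    refine hcard ▸ Polynomial.natDegree_modByMonic_lt _ A.charpoly_monic fun h => ?_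
    rw [h, Polynomial.natDegree_one] at hcard
    exact Fintype.card_ne_zero hcard.symm
  rw [AlgHom.toRingHom_eq_coe, RingHom.coe_coe, aeval_eq_aeval_mod_charpoly,
    Polynomial.aeval_eq_sum_range' hdeg, ← Fin.sum_univ_eq_sum_range]
  exact Submodule.sum_mem _ fun i _ => Submodule.smul_mem _ _ (Submodule.subset_span ⟨i, rfl⟩)

theorem exp_smul_mem_adjoin_singleton [DecidableEq ι] {𝕜 : Type*} [RCLike 𝕜]
    (A : Matrix ι ι 𝕜) (t : 𝕜) :
    NormedSpace.exp (t • A) ∈ Algebra.adjoin 𝕜 {A} :=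
  NormedSpace.exp_mem (R := 𝕜) (s := Algebra.adjoin 𝕜 {A})
    (Subalgebra.toSubmodule (Algebra.adjoin 𝕜 {A})).closed_of_finiteDimensional
    (Subalgebra.smul_mem _ (Algebra.self_mem_adjoin_singleton 𝕜 A) t)

theorem vecMul_mul_eq_zero_of_mem_span {p : Type*} {φ : ι → R} {B : Matrix ι p R}
    {S : Set (Matrix ι ι R)} (h : ∀ M ∈ S, φ ᵥ* (M * B) = 0) {M : Matrix ι ι R}
    (hM : M ∈ Submodule.span R S) : φ ᵥ* (M * B) = 0 := by
  induction hM using Submodule.span_induction with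
  | mem M hM => exact h M hM
  | zero => simp
  | add M N _ _ hM hN => rw [Matrix.add_mul, vecMul_add, hM, hN, add_zero]
  | smul c M _ hM => rw [smul_mul, vecMul_smul, hM, smul_zero]

theorem rank_eq_card_of_forall_vecMul_eq_zero {p K : Type*} [Fintype p] [Field K]
    {M : Matrix ι p K} (h : ∀ φ : ι → K, φ ᵥ* M = 0 → φ = 0) : M.rank = Fintype.card ι :=
  LinearIndependent.rank_matrix <| vecMul_injective_iff.mp <|
    (injective_iff_map_eq_zero M.vecMulLinear).mpr h

end Matrix

theorem dotProduct_intervalIntegral {ι : Type*} [Fintype ι] (φ : ι → ℝ) {f : ℝ → ι → ℝ}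
    {a b : ℝ} {μ : Measure ℝ} (hf : IntervalIntegrable f μ a b) :
    φ ⬝ᵥ ∫ s in a..b, f s ∂μ = ∫ s in a..b, φ ⬝ᵥ f s ∂μ :=
  ((dotProductBilin ℝ ℝ φ).toContinuousLinearMap.intervalIntegral_comp_comm hf).symm

theorem vecMul_kalmanMatrix_eq_zero_iff {n m : ℕ} {A : Matrix (Fin n) (Fin n) ℝ}
    {B : Matrix (Fin n) (Fin m) ℝ} {φ : Fin n → ℝ} :
    φ ᵥ* kalmanMatrix n m A B = 0 ↔ ∀ k : Fin n, φ ᵥ* (A ^ (k : ℕ) * B) = 0 := by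
  simp only [funext_iff, Prod.forall]
  rfl

theorem vecMul_exp_smul_mul_eq_zero {n m : ℕ} {A : Matrix (Fin n) (Fin n) ℝ}
    {B : Matrix (Fin n) (Fin m) ℝ} {φ : Fin n → ℝ} (hφ : φ ᵥ* kalmanMatrix n m A B = 0)
    (t : ℝ) : φ ᵥ* (NormedSpace.exp (t • A) * B) = 0 := by
  refine vecMul_mul_eq_zero_of_mem_span ?_
    (A.adjoin_singleton_le_span_pow (A.exp_smul_mem_adjoin_singleton t))
  rintro _ ⟨k, rfl⟩
  simpa using vecMul_kalmanMatrix_eq_zero_iff.mp hφ (Fin.cast (Fintype.card_fin n) k)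

/-- Kalman condition, necessity: if the linear system `Ẋ = AX + Bu` with unconstrained
controls is controllable, then the Kalman matrix has rank `n`. -/
theorem stmt7 (n m : ℕ) (A : Matrix (Fin n) (Fin n) ℝ) (B : Matrix (Fin n) (Fin m) ℝ)
    (hctrl : ∀ X₀ X₁ : Fin n → ℝ, ∃ T : ℝ, 0 < T ∧
      ∃ u : ℝ → Fin m → ℝ,
        IntervalIntegrable
          (fun s => (NormedSpace.exp ((T - s) • A)).mulVec (B.mulVec (u s))) volume 0 T ∧
        X₁ = (NormedSpace.exp (T • A)).mulVec X₀ +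
          ∫ s in (0:ℝ)..T, (NormedSpace.exp ((T - s) • A)).mulVec (B.mulVec (u s))) :
    (kalmanMatrix n m A B).rank = n := by
  refine (rank_eq_card_of_forall_vecMul_eq_zero fun φ hφ => ?_).trans (Fintype.card_fin n)
  obtain ⟨T, -, u, hu, hφT⟩ := hctrl 0 φ
  have hφφ : φ ⬝ᵥ φ = 0 := by
    nth_rewrite 2 [hφT]
    simp only [mulVec_zero, zero_add, dotProduct_intervalIntegral φ hu, dotProduct_mulVec,
      vecMul_vecMul, vecMul_exp_smul_mul_eq_zero hφ, zero_dotProduct,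
      intervalIntegral.integral_zero]
  exact dotProduct_self_eq_zero.mp hφφ
end

section
/- If T is the minimum time to reach X₁ from X₀ for the linear control system (i.e., X₁ ∈ A(X₀,T) and X₁ ∉ A(X₀,t) for all 0 < t < T), then X₁ lies on the boundary of the accessible set A(X₀,T), i.e., X₁ ∉ int A(X₀,T), given that the map t ↦ A(X₀,t) varies continuously (in Hausdorff distance) in t. -/
/-!
If a ball `B(X₁, r)` lay inside `A(X₀,T)`, pick `t < T` so close to `T` that `A(X₀,t)` is
`r/2`-close to `A(X₀,T)` in Hausdorff distance. Since `X₁ ∉ A(X₀,t)`, a linear functional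
separates `X₁` from the compact convex set `A(X₀,t)`; moving from `X₁` inside the ball in a
direction where this functional is almost maximal gives a point of `A(X₀,T)` at distance more
than `r/2` from `A(X₀,t)`, a contradiction.
-/

open Metric Filter Topology

namespace ContinuousLinearMap

variable {E : Type*} [NormedAddCommGroup E] [NormedSpace ℝ E]

theorem exists_norm_lt_one_lt_apply (f : E →L[ℝ] ℝ) {c : ℝ} (hc : c < ‖f‖) :
    ∃ v : E, ‖v‖ < 1 ∧ c < f v := by
  obtain ⟨v, hv, hfv⟩ := f.exists_lt_apply_of_lt_opNorm hc
  rcases le_or_gt 0 (f v) with hpos | hneg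
  · exact ⟨v, hv, by rwa [Real.norm_of_nonneg hpos] at hfv⟩
  · refine ⟨-v, by rwa [norm_neg], ?_⟩
    rwa [map_neg, ← Real.norm_of_nonpos hneg.le]

end ContinuousLinearMap

theorem Convex.exists_mem_ball_forall_lt_dist {E : Type*} [NormedAddCommGroup E]
    [NormedSpace ℝ E] {K : Set E} (hK : Convex ℝ K) (hKc : IsClosed K) {x : E} (hx : x ∉ K)
    {r c : ℝ} (hr : 0 < r) (hcr : c < r) :
    ∃ z ∈ ball x r, ∀ a ∈ K, c < dist z a := by
  rcases K.eq_empty_or_nonempty with rfl | ⟨a₀, ha₀⟩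
  · exact ⟨x, mem_ball_self hr, by simp⟩
  obtain ⟨f, u, hfK, hfx⟩ := geometric_hahn_banach_closed_point hK hKc hx
  have hf : 0 < ‖f‖ := by
    refine norm_pos_iff.2 fun hf0 => ?_
    have := hfK a₀ ha₀
    simp only [hf0, zero_apply] at this hfx
    linarith
  have hcr' : c / r * ‖f‖ < ‖f‖ := by
    have : c / r < 1 := (div_lt_one hr).2 hcr
    nlinarith
  obtain ⟨v, hv, hfv⟩ := f.exists_norm_lt_one_lt_apply hcr'
  refine ⟨x + r • v, ?_, fun a ha => ?_⟩
  · rw [mem_ball, dist_eq_norm, add_sub_cancel_left, norm_smul, Real.norm_of_nonneg hr.le]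
    exact mul_lt_of_lt_one_right hr hv
  · refine lt_of_mul_lt_mul_left ?_ hf.le
    calc ‖f‖ * c = r * (c / r * ‖f‖) := by field_simp
      _ < r * f v := mul_lt_mul_of_pos_left hfv hr
      _ < f (x + r • v) - f a := by
        rw [map_add, map_smul, smul_eq_mul]
        linarith [hfK a ha]
      _ = f (x + r • v - a) := (map_sub f _ _).symm
      _ ≤ ‖f‖ * dist (x + r • v) a := by
        rw [dist_eq_norm]
        exact (le_abs_self _).trans (f.le_opNorm _)

theorem stmt9_general (n : ℕ) (Acc : ℝ → Set (Fin n → ℝ)) (X₁ : Fin n → ℝ) (T : ℝ) (hT : 0 < T)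
    (hcomp : ∀ t, IsCompact (Acc t)) (hconv : ∀ t, Convex ℝ (Acc t))
    (hne : ∀ t, (Acc t).Nonempty)
    (hcont : ∀ ε > (0:ℝ), ∃ δ > (0:ℝ), ∀ t : ℝ,
      |t - T| < δ → Metric.hausdorffDist (Acc t) (Acc T) < ε)
    (hmin : ∀ t : ℝ, 0 < t → t < T → X₁ ∉ Acc t) :
    X₁ ∉ interior (Acc T) := by
  intro hint
  obtain ⟨r, hr, hball⟩ := Metric.mem_nhds_iff.1 (mem_interior_iff_mem_nhds.1 hint)
  have hclose : ∀ᶠ t in 𝓝 T, hausdorffDist (Acc t) (Acc T) < r / 2 := by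
    obtain ⟨δ, hδ, h⟩ := hcont (r / 2) (half_pos hr)
    exact Metric.eventually_nhds_iff.2 ⟨δ, hδ, fun t ht => h t (Real.dist_eq t T ▸ ht)⟩
  obtain ⟨t, ⟨hdist, ht0⟩, htT⟩ :=
    (((hclose.and (eventually_gt_nhds hT)).filter_mono nhdsWithin_le_nhds).and
      (self_mem_nhdsWithin : ∀ᶠ t in 𝓝[<] T, t < T)).exists
  obtain ⟨z, hz, hfar⟩ := (hconv t).exists_mem_ball_forall_lt_dist (hcomp t).isClosed
    (hmin t ht0 htT) hr (half_lt_self hr)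
  obtain ⟨y, hy, hzy⟩ := exists_dist_lt_of_hausdorffDist_lt (hball hz)
    (hausdorffDist_comm.trans_lt hdist)
    (hausdorffEDist_ne_top_of_nonempty_of_bounded ⟨z, hball hz⟩ (hne t)
      (hcomp T).isBounded (hcomp t).isBounded)
  exact (hfar y hy).not_gt hzy

/-- If `T` is the minimum time to reach `X₁` (so `X₁ ∈ A(X₀,T)` but `X₁ ∉ A(X₀,t)`
for `0 < t < T`), the accessible sets being nonempty, compact, convex and varying
continuously in Hausdorff distance, then `X₁` lies on the boundary of `A(X₀,T)`,
i.e. `X₁ ∉ int A(X₀,T)`. -/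
theorem stmt9 (n : ℕ) (Acc : ℝ → Set (Fin n → ℝ)) (X₁ : Fin n → ℝ) (T : ℝ) (hT : 0 < T)
    (hcomp : ∀ t, IsCompact (Acc t)) (hconv : ∀ t, Convex ℝ (Acc t))
    (hne : ∀ t, (Acc t).Nonempty)
    (hcont : ∀ ε > (0:ℝ), ∃ δ > (0:ℝ), ∀ t : ℝ,
      |t - T| < δ → Metric.hausdorffDist (Acc t) (Acc T) < ε)
    (hmem : X₁ ∈ Acc T) (hmin : ∀ t : ℝ, 0 < t → t < T → X₁ ∉ Acc t) :
    X₁ ∉ interior (Acc T) :=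
  stmt9_general n Acc X₁ T hT hcomp hconv hne hcont hmin
end
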